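/- Last-stop rule of the optimal refuelling strategy (Lemma 1): let x be an optimal plan with x (n−1) > 0 and c (n−1) > 0. Then the vehicle reaches the goal with an empty tank: f n = 0. (Otherwise, reducing the purchase at the last stop by min(x (n−1), f n) > 0 would yield a feasible plan of strictly smaller cost.) -/

import Mathlib

/-- Fuel level recursion on ℕ: level 0 is the initial fuel `q0`, and the level after
stop `i` is the previous level plus the refuel amount `x i` minus the consumption `d i`. -/
noncomputable def fuelNat (q0 : ℝ) (d x : ℕ → ℝ) : ℕ → ℝ
  | 0 => q0
  | i + 1 => fuelNat q0 d x i + x i - d i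

/-- Fuel levels `f : Fin (n+1) → ℝ` of a plan `x : Fin n → ℝ` with consumptions `d`,
initial fuel `q0`: `f 0 = q0` and `f (i+1) = f i + x i - d i`. -/
noncomputable def fuel {n : ℕ} (q0 : ℝ) (d x : Fin n → ℝ) (i : Fin (n + 1)) : ℝ :=
  fuelNat q0 (fun j => if h : j < n then d ⟨j, h⟩ else 0)
    (fun j => if h : j < n then x ⟨j, h⟩ else 0) i

/-- A plan `x` is feasible (for tank capacity `Q` and initial fuel `q0`) if for every stop `i`:
`x i ≥ 0`, `f i + x i ≤ Q`, and `f (i+1) ≥ 0`. -/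
def Feasible {n : ℕ} (Q q0 : ℝ) (d x : Fin n → ℝ) : Prop :=
  ∀ i : Fin n, 0 ≤ x i ∧ fuel q0 d x i.castSucc + x i ≤ Q ∧ 0 ≤ fuel q0 d x i.succ

/-- Cost of a plan: `Σ_i (c i) * (x i)`. -/
noncomputable def cost {n : ℕ} (c x : Fin n → ℝ) : ℝ := ∑ i, c i * x i

/-! If the tank is not empty at the goal, buy `ε = min (x (n-1)) (f n) > 0` less at the last
stop. Only the fuel level at the goal changes, and it drops by `ε` to a nonnegative value, so the
new plan is feasible, while its cost is smaller by `c (n-1) * ε > 0`. -/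

section Fuel

variable {n : ℕ} (q0 : ℝ) (d : Fin n → ℝ)

theorem fuel_succ (x : Fin n → ℝ) (i : Fin n) :
    fuel q0 d x i.succ = fuel q0 d x i.castSucc + x i - d i := by
  simp [fuel, fuelNat, i.isLt]

theorem fuel_congr {x y : Fin n → ℝ} {i : Fin (n + 1)}
    (h : ∀ j : Fin n, j.castSucc < i → x j = y j) : fuel q0 d x i = fuel q0 d y i := by
  induction i using Fin.induction with
  | zero => rfl
  | succ i ih =>
    rw [fuel_succ, fuel_succ, ih fun j hj => h j (hj.trans Fin.castSucc_lt_succ),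
      h i Fin.castSucc_lt_succ]

end Fuel

section LastStop

variable {m : ℕ} (q0 : ℝ) (d x : Fin (m + 1) → ℝ) (v : ℝ)

theorem fuel_update_last_castSucc (i : Fin (m + 1)) :
    fuel q0 d (Function.update x (Fin.last m) v) i.castSucc = fuel q0 d x i.castSucc :=
  fuel_congr q0 d fun _ hj =>
    Function.update_of_ne (Fin.ne_last_of_lt (Fin.castSucc_lt_castSucc_iff.mp hj)) _ _

theorem fuel_update_last_last :
    fuel q0 d (Function.update x (Fin.last m) v) (Fin.last (m + 1)) =
      fuel q0 d x (Fin.last (m + 1)) + (v - x (Fin.last m)) := by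
  rw [← Fin.succ_last, fuel_succ, fuel_succ, fuel_update_last_castSucc,
    Function.update_self]
  ring

variable {q0 d x}

theorem Feasible.update_last_sub {Q ε : ℝ} (hx : Feasible Q q0 d x) (hε : 0 ≤ ε)
    (hεx : ε ≤ x (Fin.last m)) (hεf : ε ≤ fuel q0 d x (Fin.last (m + 1))) :
    Feasible Q q0 d (Function.update x (Fin.last m) (x (Fin.last m) - ε)) := by
  intro i
  induction i using Fin.lastCases with
  | last =>
    obtain ⟨-, hcap, -⟩ := hx (Fin.last m)
    rw [fuel_update_last_castSucc, Fin.succ_last, fuel_update_last_last, Function.update_self]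
    refine ⟨?_, ?_, ?_⟩ <;> linarith
  | cast i =>
    have hne : i.castSucc ≠ Fin.last m := Fin.castSucc_ne_last i
    rw [Function.update_of_ne hne, fuel_update_last_castSucc, Fin.succ_castSucc,
      fuel_update_last_castSucc]
    simpa only [Fin.succ_castSucc] using hx i.castSucc

end LastStop

theorem cost_update {n : ℕ} (c x : Fin n → ℝ) (k : Fin n) (v : ℝ) :
    cost c (Function.update x k v) = cost c x + c k * (v - x k) := by
  rw [cost, cost, ← sub_eq_iff_eq_add', ← Finset.sum_sub_distrib, Finset.sum_eq_single k]
  · rw [Function.update_self]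
    ring
  · intro i _ hi
    rw [Function.update_of_ne hi, sub_self]
  · simp

/-- Lemma 1, last-stop rule: at an optimal plan, if the last stop `n-1` is a
refuelling stop and its price is positive, the vehicle reaches the goal with an empty
tank: `f n = 0`. -/
theorem optimal_empty_tank_at_goal_of_refuel_last {n : ℕ} (hn : 0 < n) (Q q0 : ℝ)
    (d c : Fin n → ℝ)
    (x : Fin n → ℝ) (hfeas : Feasible Q q0 d x)
    (hopt : ∀ y : Fin n → ℝ, Feasible Q q0 d y → cost c x ≤ cost c y)
    (hlast : 0 < x ⟨n - 1, by omega⟩) (hclast : 0 < c ⟨n - 1, by omega⟩) :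
    fuel q0 d x (Fin.last n) = 0 := by
  obtain ⟨m, rfl⟩ : ∃ m, n = m + 1 := ⟨n - 1, by omega⟩
  set F := fuel q0 d x (Fin.last (m + 1))
  by_contra hne
  have hF : 0 < F := lt_of_le_of_ne (hfeas (Fin.last m)).2.2 (Ne.symm hne)
  set ε := min (x (Fin.last m)) F
  have hε : 0 < ε := lt_min hlast hF
  have hcheaper := hopt _ (hfeas.update_last_sub hε.le (min_le_left _ _) (min_le_right _ _))
  rw [cost_update] at hcheaper
  have : 0 < c (Fin.last m) * ε := mul_pos hclast hε
  linarith
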